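/- Let f : [0,1] → ℝ be continuous and b(x) = (f(1) − f(0))x + f(0). For each k ∈ ℕ, let 0 = x_{0,k} < x_{1,k} < ⋯ < x_{n_k,k} = 1 be a partition of [0,1], let l_{i,k} : [0,1] → [0,1] (i = 1,…,n_k) be continuous injective maps with l_{i,k}(0) = x_{i−1,k}, l_{i,k}(1) = x_{i,k}, l_{i,k}([0,1]) = [x_{i−1,k}, x_{i,k}], and let S_{i,k} : [0,1] → ℝ be continuous with sup_{k} max_{i} sup_{t∈[0,1]} |S_{i,k}(t)| ≤ s for some s ∈ [0,1). Let T_k be the operator on C_*[0,1] := {g ∈ C[0,1] : g(0) = f(0), g(1) = f(1)} determined by T_k g (l_{i,k}(t)) = f(l_{i,k}(t)) + S_{i,k}(t)·(g(t) − b(t)) for t ∈ [0,1], i = 1,…,n_k. Set r := (‖f‖_∞ + s‖b‖_∞)/(1−s). Then there exists f* ∈ C_*[0,1] with ‖f*‖_∞ ≤ r such that for every f_0 ∈ C_*[0,1] with ‖f_0‖_∞ ≤ r, the backward trajectories Ψ_k(f_0) := T_1 ∘ T_2 ∘ ⋯ ∘ T_k (f_0) converge uniformly on [0,1] to f*; in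 particular the limit is independent of f_0 (e.g. one may take f_0 = f or f_0 = b). The limit f* is a continuous non-stationary fractal interpolation function. -/

import Mathlib

open Filter Topology unitInterval

/-- Backward trajectory of a sequence of operators:
`backwardTraj T k = T 0 ∘ T 1 ∘ ⋯ ∘ T (k-1)`. -/
def backwardTraj {α : Type*} (T : ℕ → α → α) : ℕ → α → α
  | 0 => id
  | k + 1 => fun a => backwardTraj T k (T k a)

/-!
Work in the space of real functions on `[0,1]` with the sup (extended) distance, and let `M`
be the set of continuous functions with the prescribed endpoint values and sup norm at most `r`.
`M` is closed and bounded, and each `T k` maps it into itself: `T k g` is continuous because the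
pieces `l i` jointly form a quotient map from finitely many copies of `[0,1]`, and the choice of
`r` makes `‖f‖ + s (r + ‖b‖) = r`. Each `T k` is `s`-Lipschitz since two images differ on the
piece `l i ([0,1])` by `S i · (g - h)`. Hence `T 0 ∘ ⋯ ∘ T (k-1)` is `s ^ k`-Lipschitz on `M`:
the trajectory of any point moves by at most `s ^ k · diam M` at step `k`, so it is Cauchy, and
two trajectories are `s ^ k · diam M`-close, so they share the limit.
-/

open Set NNReal ENNReal UniformConvergence

section BackwardTrajectory

variable {α : Type*} {T : ℕ → α → α} {M : Set α}

theorem backwardTraj_conj {β : Type*} {e : α → β} {e' : β → α} (h : Function.LeftInverse e' e)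
    (T : ℕ → α → α) (k : ℕ) (a : α) :
    backwardTraj (fun k b => e (T k (e' b))) k (e a) = e (backwardTraj T k a) := by
  induction k generalizing a with
  | zero => rfl
  | succ k ih => simp only [backwardTraj, h a, ih]

theorem mapsTo_backwardTraj (hMT : ∀ k, MapsTo (T k) M M) (k : ℕ) :
    MapsTo (backwardTraj T k) M M := by
  induction k with
  | zero => exact mapsTo_id M
  | succ k ih => exact ih.comp (hMT k)

theorem lipschitzOnWith_backwardTraj [PseudoEMetricSpace α] {K : ℝ≥0}
    (hMT : ∀ k, MapsTo (T k) M M) (hT : ∀ k, LipschitzOnWith K (T k) M) (k : ℕ) :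
    LipschitzOnWith (K ^ k) (backwardTraj T k) M := by
  induction k with
  | zero => rw [pow_zero]; exact LipschitzWith.id.lipschitzOnWith
  | succ k ih => rw [pow_succ]; exact ih.comp (hT k) (hMT k)

theorem exists_forall_tendsto_backwardTraj [EMetricSpace α] [CompleteSpace α] {K : ℝ≥0}
    (hK : K < 1) (hM : IsClosed M) (hne : M.Nonempty) (hdiam : Metric.ediam M ≠ ⊤)
    (hMT : ∀ k, MapsTo (T k) M M) (hT : ∀ k, LipschitzOnWith K (T k) M) :
    ∃ p ∈ M, ∀ a ∈ M, Tendsto (fun k => backwardTraj T k a) atTop (𝓝 p) := by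
  have hclose : ∀ k, ∀ a ∈ M, ∀ c ∈ M,
      edist (backwardTraj T k a) (backwardTraj T k c) ≤ Metric.ediam M * K ^ k :=
    fun k a ha c hc => by
      rw [mul_comm]
      exact (lipschitzOnWith_backwardTraj hMT hT k).edist_le_mul_of_le ha hc
        (Metric.edist_le_ediam_of_mem ha hc) |>.trans_eq (by rw [ENNReal.coe_pow])
  obtain ⟨a, ha⟩ := hne
  obtain ⟨p, hp⟩ := cauchySeq_tendsto_of_complete <|
    cauchySeq_of_edist_le_geometric (K : ℝ≥0∞) _ (by exact_mod_cast hK) hdiam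
      fun k => hclose k a ha (T k a) (hMT k ha)
  refine ⟨p, hM.mem_of_tendsto hp (.of_forall fun k => mapsTo_backwardTraj hMT k ha),
    fun c hc => ?_⟩
  have hdecay : Tendsto (fun k => Metric.ediam M * (K : ℝ≥0∞) ^ k) atTop (𝓝 0) := by
    simpa using ENNReal.Tendsto.const_mul
      (ENNReal.tendsto_pow_atTop_nhds_zero_of_lt_one (by exact_mod_cast hK)) (.inr hdiam)
  rw [tendsto_iff_edist_tendsto_0] at hp ⊢
  refine tendsto_of_tendsto_of_tendsto_of_le_of_le tendsto_const_nhds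
    (by simpa using hdecay.add hp) (fun _ => zero_le) fun k => ?_
  exact (edist_triangle _ _ _).trans (add_le_add_left (hclose k c hc a ha) _)

end BackwardTrajectory

theorem exists_mem_Icc_castSucc_succ {α : Type*} [LinearOrder α] {n : ℕ} (hn : 0 < n)
    (x : Fin (n + 1) → α) {u : α} (hu : u ∈ Icc (x 0) (x (Fin.last n))) :
    ∃ i : Fin n, u ∈ Icc (x i.castSucc) (x i.succ) := by
  induction n with
  | zero => omega
  | succ m ih =>
    by_cases hum : u ≤ x (Fin.last m).castSucc
    · rcases Nat.eq_zero_or_pos m with rfl | hm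
      · exact ⟨0, hu.1, hu.2⟩
      · obtain ⟨i, hi⟩ := ih hm (x ∘ Fin.castSucc) ⟨hu.1, hum⟩
        exact ⟨i.castSucc, hi⟩
    · exact ⟨Fin.last m, (not_le.1 hum).le, hu.2⟩

theorem continuous_of_continuous_comp_of_forall_exists_eq {ι X Y Z : Type*} [Finite ι]
    [TopologicalSpace X] [CompactSpace X] [TopologicalSpace Y] [T2Space Y] [TopologicalSpace Z]
    {l : ι → X → Y} (hl : ∀ i, Continuous (l i)) (hcover : ∀ y, ∃ i t, l i t = y)
    {F : Y → Z} (hF : ∀ i, Continuous (F ∘ l i)) : Continuous F := by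
  have hq : IsQuotientMap fun p : Σ _ : ι, X => l p.1 p.2 :=
    .of_surjective_continuous (fun y => let ⟨i, t, h⟩ := hcover y; ⟨⟨i, t⟩, h⟩)
      (continuous_sigma hl)
  exact hq.continuous_iff.2 (continuous_sigma hF)

theorem Continuous.abs_le_ciSup_abs {X : Type*} [TopologicalSpace X] [CompactSpace X]
    {f : X → ℝ} (hf : Continuous f) (t : X) : |f t| ≤ ⨆ t, |f t| :=
  le_ciSup (isCompact_range hf.abs).bddAbove t

namespace UniformFun

variable {X : Type*}

theorem isClosed_setOf_abs_le (r : ℝ) : IsClosed {g : X →ᵤ ℝ | ∀ t, |toFun g t| ≤ r} := by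
  simp only [ofPred_forall]
  exact isClosed_iInter fun t => isClosed_le (lipschitzWith_eval t).continuous.abs continuous_const

theorem ediam_setOf_abs_le_le (r : ℝ) :
    Metric.ediam {g : X →ᵤ ℝ | ∀ t, |toFun g t| ≤ r} ≤ ENNReal.ofReal (2 * r) :=
  Metric.ediam_le fun _ hg _ hh => edist_le.2 fun t => by
    rw [edist_dist, Real.dist_eq]
    exact ENNReal.ofReal_le_ofReal <| (abs_sub _ _).trans (by linarith [hg t, hh t])

end UniformFun

section ReadBajraktarevic

variable {X ι : Type*} {l : ι → X → X} {S : ι → X → ℝ} {f b : X → ℝ} {R : (X → ℝ) → X → ℝ}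

theorem rb_apply_of_eq (hR : ∀ g i t, R g (l i t) = f (l i t) + S i t * (g t - b t))
    {g : X → ℝ} {i : ι} {t : X} (h : g t = b t) : R g (l i t) = f (l i t) := by
  rw [hR, h, sub_self, mul_zero, add_zero]

theorem continuous_rb [TopologicalSpace X] [CompactSpace X] [T2Space X] [Finite ι]
    (hR : ∀ g i t, R g (l i t) = f (l i t) + S i t * (g t - b t))
    (hcover : ∀ u, ∃ i t, l i t = u) (hl : ∀ i, Continuous (l i)) (hS : ∀ i, Continuous (S i))
    (hf : Continuous f) (hb : Continuous b) {g : X → ℝ} (hg : Continuous g) :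
    Continuous (R g) := by
  refine continuous_of_continuous_comp_of_forall_exists_eq hl hcover fun i => ?_
  rw [show R g ∘ l i = fun t => f (l i t) + S i t * (g t - b t) from funext (hR g i)]
  fun_prop

theorem abs_rb_le (hR : ∀ g i t, R g (l i t) = f (l i t) + S i t * (g t - b t))
    (hcover : ∀ u, ∃ i t, l i t = u) {A B C s : ℝ} (hf : ∀ t, |f t| ≤ A) (hb : ∀ t, |b t| ≤ B)
    (hs : 0 ≤ s) (hS : ∀ i t, |S i t| ≤ s) {g : X → ℝ} (hg : ∀ t, |g t| ≤ C) (u : X) :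
    |R g u| ≤ A + s * (C + B) := by
  obtain ⟨i, t, rfl⟩ := hcover u
  rw [hR]
  calc |f (l i t) + S i t * (g t - b t)| ≤ |f (l i t)| + |S i t| * (|g t| + |b t|) :=
        (abs_add_le _ _).trans (by rw [abs_mul]; gcongr; exact abs_sub _ _)
    _ ≤ A + s * (C + B) := by gcongr; exacts [hf _, hS i t, hg t, hb t]

theorem lipschitzWith_rb (hR : ∀ g i t, R g (l i t) = f (l i t) + S i t * (g t - b t))
    (hcover : ∀ u, ∃ i t, l i t = u) {K : ℝ≥0} (hS : ∀ i t, |S i t| ≤ K) :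
    LipschitzWith K fun g : X →ᵤ ℝ => UniformFun.ofFun (R (UniformFun.toFun g)) := by
  refine UniformFun.lipschitzWith_ofFun_iff.2 fun u g h => ?_
  obtain ⟨i, t, rfl⟩ := hcover u
  simp only [hR]
  calc edist (f (l i t) + S i t * (UniformFun.toFun g t - b t))
        (f (l i t) + S i t * (UniformFun.toFun h t - b t))
      = ‖S i t‖ₑ * edist (UniformFun.toFun g t) (UniformFun.toFun h t) := by
        rw [edist_eq_enorm_sub, edist_eq_enorm_sub, ← enorm_mul]; ring_nf
    _ ≤ K * edist g h := by
        gcongr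
        · rw [Real.enorm_eq_ofReal_abs, ← ENNReal.ofReal_coe_nnreal]
          exact ENNReal.ofReal_le_ofReal (hS i t)
        · exact UniformFun.edist_eval_le

end ReadBajraktarevic

section Partition

variable {n : ℕ} {x : Fin (n + 1) → I} {X : Type*} {l : Fin n → X → I}

theorem exists_apply_eq_of_range_eq_Icc (hn : 0 < n) (hx0 : x 0 = 0)
    (hxn : x (Fin.last n) = 1) (hlr : ∀ i, range (l i) = Icc (x i.castSucc) (x i.succ)) (u : I) :
    ∃ i t, l i t = u := by
  obtain ⟨i, hi⟩ := exists_mem_Icc_castSucc_succ hn x (u := u)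
    (by rw [hx0, hxn]; exact ⟨nonneg', le_one'⟩)
  rw [← hlr i] at hi
  exact ⟨i, hi⟩

theorem exists_apply_eq_zero (hn : 0 < n) (hx0 : x 0 = 0) {t₀ : X}
    (hl0 : ∀ i, l i t₀ = x i.castSucc) : ∃ i, l i t₀ = 0 :=
  ⟨⟨0, hn⟩, by rw [hl0, Fin.castSucc_mk, Fin.mk_zero', hx0]⟩

theorem exists_apply_eq_one (hn : 0 < n) (hxn : x (Fin.last n) = 1) {t₁ : X}
    (hl1 : ∀ i, l i t₁ = x i.succ) : ∃ i, l i t₁ = 1 := by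
  obtain ⟨i, hi⟩ := Fin.exists_succ_eq (x := Fin.last n) |>.2 fun h =>
    hn.ne' (by simpa using congrArg Fin.val h)
  exact ⟨i, by rw [hl1, hi, hxn]⟩

end Partition

/-- The space `C_*[0,1]` of the paper, cut down to the sup-norm ball of radius `r`, as a subset
of the space of functions with the topology of uniform convergence. -/
def pinnedBall (f : I → ℝ) (r : ℝ) : Set (I →ᵤ ℝ) :=
  {g | Continuous (UniformFun.toFun g) ∧ UniformFun.toFun g 0 = f 0 ∧
    UniformFun.toFun g 1 = f 1} ∩ {g | ∀ t, |UniformFun.toFun g t| ≤ r}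

theorem isClosed_pinnedBall (f : I → ℝ) (r : ℝ) : IsClosed (pinnedBall f r) := by
  refine IsClosed.inter ?_ (UniformFun.isClosed_setOf_abs_le r)
  simp only [ofPred_and]
  exact (UniformFun.isClosed_setOfPred_continuous _).inter <|
    (isClosed_eq (UniformFun.lipschitzWith_eval 0).continuous continuous_const).inter
      (isClosed_eq (UniformFun.lipschitzWith_eval 1).continuous continuous_const)

theorem ediam_pinnedBall_ne_top (f : I → ℝ) (r : ℝ) : Metric.ediam (pinnedBall f r) ≠ ⊤ :=
  ne_top_of_le_ne_top ofReal_ne_top <|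
    (Metric.ediam_mono inter_subset_right).trans (UniformFun.ediam_setOf_abs_le_le r)

theorem mapsTo_rb_pinnedBall {ι : Type*} [Finite ι] {l : ι → I → I} {S : ι → I → ℝ}
    {f b : I → ℝ} {R : (I → ℝ) → I → ℝ}
    (hR : ∀ g i t, R g (l i t) = f (l i t) + S i t * (g t - b t))
    (hcover : ∀ u, ∃ i t, l i t = u) (h0 : ∃ i, l i 0 = 0) (h1 : ∃ i, l i 1 = 1)
    (hl : ∀ i, Continuous (l i)) (hS : ∀ i, Continuous (S i)) (hf : Continuous f)
    (hb : Continuous b) (hb0 : b 0 = f 0) (hb1 : b 1 = f 1) {A B r s : ℝ}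
    (hfA : ∀ t, |f t| ≤ A) (hbB : ∀ t, |b t| ≤ B) (hs : 0 ≤ s) (hSs : ∀ i t, |S i t| ≤ s)
    (hr : A + s * (r + B) ≤ r) :
    MapsTo (fun g => UniformFun.ofFun (R (UniformFun.toFun g))) (pinnedBall f r)
      (pinnedBall f r) := by
  rintro g ⟨⟨hg, hg0, hg1⟩, hgr⟩
  obtain ⟨i₀, hi₀⟩ := h0
  obtain ⟨i₁, hi₁⟩ := h1
  refine ⟨⟨continuous_rb hR hcover hl hS hf hb hg, ?_, ?_⟩,
    fun u => (abs_rb_le hR hcover hfA hbB hs hSs hgr u).trans hr⟩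
  · simpa [hi₀] using rb_apply_of_eq hR (i := i₀) (hg0.trans hb0.symm)
  · simpa [hi₁] using rb_apply_of_eq hR (i := i₁) (hg1.trans hb1.symm)

theorem nonstationary_fractal_interpolation_general
    (f : unitInterval → ℝ) (hf : Continuous f)
    (b : unitInterval → ℝ) (hb : ∀ t, b t = (f 1 - f 0) * (t : ℝ) + f 0)
    (n : ℕ → ℕ) (hn : ∀ k, 0 < n k)
    (x : (k : ℕ) → Fin (n k + 1) → unitInterval)
    (hx0 : ∀ k, x k 0 = 0) (hxn : ∀ k, x k (Fin.last (n k)) = 1)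
    (l : (k : ℕ) → Fin (n k) → unitInterval → unitInterval)
    (hlc : ∀ k i, Continuous (l k i))
    (hl0 : ∀ k i, l k i 0 = x k i.castSucc) (hl1 : ∀ k i, l k i 1 = x k i.succ)
    (hlr : ∀ k i, Set.range (l k i) = Set.Icc (x k i.castSucc) (x k i.succ))
    (S : (k : ℕ) → Fin (n k) → unitInterval → ℝ) (hS : ∀ k i, Continuous (S k i))
    (s : ℝ) (hs0 : 0 ≤ s) (hs1 : s < 1) (hSb : ∀ k i t, |S k i t| ≤ s)
    (T : ℕ → (unitInterval → ℝ) → (unitInterval → ℝ))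
    (hT : ∀ k (g : unitInterval → ℝ) i t,
      T k g (l k i t) = f (l k i t) + S k i t * (g t - b t)) :
    ∃ fs : unitInterval → ℝ, Continuous fs ∧ fs 0 = f 0 ∧ fs 1 = f 1 ∧
      (∀ t, |fs t| ≤ ((⨆ t, |f t|) + s * ⨆ t, |b t|) / (1 - s)) ∧
      ∀ f₀ : unitInterval → ℝ, Continuous f₀ → f₀ 0 = f 0 → f₀ 1 = f 1 →
        (∀ t, |f₀ t| ≤ ((⨆ t, |f t|) + s * ⨆ t, |b t|) / (1 - s)) →
        TendstoUniformly (fun k => backwardTraj T k f₀) fs atTop := by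
  have hbc : Continuous b := by rw [funext hb]; fun_prop
  set r := ((⨆ t, |f t|) + s * ⨆ t, |b t|) / (1 - s) with hr
  have hr_invariant : (⨆ t, |f t|) + s * (r + ⨆ t, |b t|) ≤ r :=
    le_of_eq (by rw [hr]; field_simp [(by linarith : 1 - s ≠ 0)]; ring)
  have hfr : ∀ t, |f t| ≤ r := fun t => (hf.abs_le_ciSup_abs t).trans <| by
    rw [hr, le_div_iff₀ (by linarith)]
    nlinarith [(abs_nonneg _).trans (hf.abs_le_ciSup_abs 0),
      (abs_nonneg _).trans (hbc.abs_le_ciSup_abs 0)]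
  have hcover k := exists_apply_eq_of_range_eq_Icc (hn k) (hx0 k) (hxn k) (hlr k)
  obtain ⟨p, hpM, hp⟩ := exists_forall_tendsto_backwardTraj
    (T := fun k g => UniformFun.ofFun (T k (UniformFun.toFun g))) (K := ⟨s, hs0⟩) hs1
    (isClosed_pinnedBall f r) ⟨UniformFun.ofFun f, ⟨hf, rfl, rfl⟩, hfr⟩
    (ediam_pinnedBall_ne_top f r)
    (fun k => mapsTo_rb_pinnedBall (hT k) (hcover k) (exists_apply_eq_zero (hn k) (hx0 k) (hl0 k))
      (exists_apply_eq_one (hn k) (hxn k) (hl1 k)) (hlc k) (hS k) hf hbc (by simp [hb])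
      (by simp [hb]) hf.abs_le_ciSup_abs hbc.abs_le_ciSup_abs hs0 (hSb k) hr_invariant)
    fun k => (lipschitzWith_rb (hT k) (hcover k) (K := ⟨s, hs0⟩) (hSb k)).lipschitzOnWith
  refine ⟨UniformFun.toFun p, hpM.1.1, hpM.1.2.1, hpM.1.2.2, hpM.2, fun f₀ hc h0 h1 hr₀ => ?_⟩
  have := UniformFun.tendsto_iff_tendstoUniformly.1 (hp (UniformFun.ofFun f₀) ⟨⟨hc, h0, h1⟩, hr₀⟩)
  simp only [backwardTraj_conj (e := UniformFun.ofFun) (e' := UniformFun.toFun) (fun _ => rfl)]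
    at this
  exact this

/-- Non-stationary fractal interpolation on `[0,1]`: given, for each `k`,
a partition `0 = x_{0,k} < ⋯ < x_{n_k,k} = 1`, continuous injective maps
`l_{i,k} : [0,1] → [0,1]` onto `[x_{i-1,k}, x_{i,k}]`, continuous scaling functions
`S_{i,k}` uniformly bounded by `s < 1`, and Read–Bajraktarević operators
`T_k g (l_{i,k} t) = f (l_{i,k} t) + S_{i,k} t * (g t - b t)`, there is a continuous
`f* ∈ C_*[0,1]` with `‖f*‖∞ ≤ r = (‖f‖∞ + s ‖b‖∞)/(1-s)` such that the backward
trajectories of every `f₀ ∈ C_*[0,1]` with `‖f₀‖∞ ≤ r` converge uniformly to `f*`. -/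
theorem nonstationary_fractal_interpolation
    (f : unitInterval → ℝ) (hf : Continuous f)
    (b : unitInterval → ℝ) (hb : ∀ t, b t = (f 1 - f 0) * (t : ℝ) + f 0)
    (n : ℕ → ℕ) (hn : ∀ k, 0 < n k)
    (x : (k : ℕ) → Fin (n k + 1) → unitInterval)
    (hx0 : ∀ k, x k 0 = 0) (hxn : ∀ k, x k (Fin.last (n k)) = 1)
    (hxmono : ∀ k, StrictMono (x k))
    (l : (k : ℕ) → Fin (n k) → unitInterval → unitInterval)
    (hlc : ∀ k i, Continuous (l k i)) (hli : ∀ k i, Function.Injective (l k i))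
    (hl0 : ∀ k i, l k i 0 = x k i.castSucc) (hl1 : ∀ k i, l k i 1 = x k i.succ)
    (hlr : ∀ k i, Set.range (l k i) = Set.Icc (x k i.castSucc) (x k i.succ))
    (S : (k : ℕ) → Fin (n k) → unitInterval → ℝ) (hS : ∀ k i, Continuous (S k i))
    (s : ℝ) (hs0 : 0 ≤ s) (hs1 : s < 1) (hSb : ∀ k i t, |S k i t| ≤ s)
    (T : ℕ → (unitInterval → ℝ) → (unitInterval → ℝ))
    (hT : ∀ k (g : unitInterval → ℝ) i t,
      T k g (l k i t) = f (l k i t) + S k i t * (g t - b t)) :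
    ∃ fs : unitInterval → ℝ, Continuous fs ∧ fs 0 = f 0 ∧ fs 1 = f 1 ∧
      (∀ t, |fs t| ≤ ((⨆ t, |f t|) + s * ⨆ t, |b t|) / (1 - s)) ∧
      ∀ f₀ : unitInterval → ℝ, Continuous f₀ → f₀ 0 = f 0 → f₀ 1 = f 1 →
        (∀ t, |f₀ t| ≤ ((⨆ t, |f t|) + s * ⨆ t, |b t|) / (1 - s)) →
        TendstoUniformly (fun k => backwardTraj T k f₀) fs atTop :=
  nonstationary_fractal_interpolation_general f hf b hb n hn x hx0 hxn l hlc hl0 hl1 hlr S hS s hs0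
    hs1 hSb T hT
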